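/- arXiv:1008.3122 — 2 statements merged into one kernel-verified Lean document; each statement's English description precedes it below -/
import Mathlib

section
/- Let U(z) = sum_{n=0}^N ρ_n z^n be an m×m polynomial matrix function with ρ_N ≠ 0 (length N), unitary for all |z| = 1, so that det U(z) = c z^k with |c| = 1. Then k ≥ N. -/
/-!
On the unit circle `U*(z) = U(z)ᴴ`, so the polynomial matrix `P(z) = zᴺ U*(z) = ∑ ρₙᴴ zᴺ⁻ⁿ`
satisfies `U P = zᴺ` there, hence identically. Multiplying by the adjugate gives
`c zᵏ P = zᴺ adj U`. If `k < N`, comparing the coefficients of `zᵏ` gives `c ρ_Nᴴ = 0`,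
and `c ≠ 0` because `U(1)` is unitary.
-/

open Matrix Polynomial Finset

theorem Polynomial.mul_coeff_zero_eq_zero_of_C_mul_X_pow_mul_eq {R : Type*} [CommSemiring R]
    {p q : R[X]} {c : R} {k N : ℕ} (hk : k < N) (h : C c * X ^ k * q = X ^ N * p) :
    c * q.coeff 0 = 0 := by
  have := congrArg (coeff · k) h
  rw [X_pow_dvd_iff.mp (dvd_mul_right _ _) k hk, mul_assoc, coeff_C_mul, coeff_X_pow_mul'] at this
  simpa using this

theorem Complex.infinite_sphere_zero_one : (Metric.sphere (0 : ℂ) 1).Infinite := by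
  refine (isPreconnected_sphere ?_ 0 1).infinite_of_nontrivial ⟨1, by simp, -1, by simp, by norm_num⟩
  rw [Complex.rank_real_complex]; norm_num

namespace Matrix

variable {R : Type*} {ι κ : Type*}

noncomputable def polyOfCoeffs [CommSemiring R] (ρ : ℕ → Matrix ι κ R) (N : ℕ) :
    Matrix ι κ R[X] :=
  ∑ n ∈ range (N + 1), (X ^ n : R[X]) • (ρ n).map C

/-- `Xᴺ U*(X)`, where `U*(z) = ∑ₙ ρₙᴴ z⁻ⁿ` is the paraconjugate of `U(z) = ∑ₙ ρₙ zⁿ`. -/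
noncomputable def starReflect [CommSemiring R] [StarRing R] (ρ : ℕ → Matrix ι κ R) (N : ℕ) :
    Matrix κ ι R[X] :=
  ∑ n ∈ range (N + 1), (X ^ (N - n) : R[X]) • (ρ n)ᴴ.map C

theorem map_eval_sum_X_pow_smul_map_C [CommSemiring R] (s : Finset ℕ) (e : ℕ → ℕ)
    (A : ℕ → Matrix ι κ R) (z : R) :
    (∑ n ∈ s, (X ^ e n : R[X]) • (A n).map C).map (eval z) = ∑ n ∈ s, z ^ e n • A n := by
  ext i j
  simp [Matrix.sum_apply, eval_finsetSum, mul_comm (A _ i j)]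

theorem map_eval_polyOfCoeffs [CommSemiring R] (ρ : ℕ → Matrix ι κ R) (N : ℕ) (z : R) :
    (polyOfCoeffs ρ N).map (eval z) = ∑ n ∈ range (N + 1), z ^ n • ρ n :=
  map_eval_sum_X_pow_smul_map_C _ _ _ z

theorem map_eval_starReflect {𝕜 : Type*} [RCLike 𝕜] (ρ : ℕ → Matrix ι κ 𝕜) (N : ℕ) {z : 𝕜}
    (hz : ‖z‖ = 1) :
    (starReflect ρ N).map (eval z) = z ^ N • (∑ n ∈ range (N + 1), z ^ n • ρ n)ᴴ := by
  have hz0 : z ≠ 0 := by rintro rfl; simp at hz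
  rw [starReflect, map_eval_sum_X_pow_smul_map_C, conjTranspose_sum, Finset.smul_sum]
  refine Finset.sum_congr rfl fun n hn => ?_
  rw [conjTranspose_smul, smul_smul, star_pow, RCLike.star_def, ← RCLike.inv_eq_conj hz,
    inv_pow, ← pow_sub₀ z hz0 (Nat.lt_succ_iff.mp (Finset.mem_range.mp hn))]

theorem coeff_zero_starReflect [CommSemiring R] [StarRing R] (ρ : ℕ → Matrix ι κ R) (N : ℕ)
    (i : κ) (j : ι) : (starReflect ρ N i j).coeff 0 = star (ρ N j i) := by
  simp only [starReflect, Matrix.sum_apply, finsetSum_coeff, smul_apply, map_apply,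
    conjTranspose_apply, smul_eq_mul, coeff_X_pow_mul', coeff_C]
  rw [Finset.sum_eq_single N]
  · simp
  · intro n hn hne
    have : n < N := lt_of_le_of_ne (Nat.lt_succ_iff.mp (Finset.mem_range.mp hn)) hne
    simp [Nat.sub_ne_zero_of_lt this]
  · simp

theorem eq_of_infinite_map_eval_eq [CommRing R] [IsDomain R] {A B : Matrix ι κ R[X]} {s : Set R}
    (hs : s.Infinite) (h : ∀ z ∈ s, A.map (eval z) = B.map (eval z)) : A = B := by
  ext i j : 1
  exact eq_of_infinite_eval_eq _ _ (hs.mono fun z hz => congrFun₂ (h z hz) i j)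

theorem det_smul_eq_smul_adjugate_of_mul_eq_smul_one [CommRing R] [Fintype ι] [DecidableEq ι]
    {A B : Matrix ι ι R} {r : R} (h : A * B = r • 1) : A.det • B = r • A.adjugate :=
  calc A.det • B = A.adjugate * A * B := by rw [adjugate_mul, smul_mul, Matrix.one_mul]
    _ = r • A.adjugate := by rw [Matrix.mul_assoc, h, Matrix.mul_smul, Matrix.mul_one]

theorem polyOfCoeffs_mul_starReflect [Fintype ι] [DecidableEq ι] (ρ : ℕ → Matrix ι ι ℂ) (N : ℕ)
    (hunit : ∀ z : ℂ, ‖z‖ = 1 →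
      (∑ n ∈ range (N + 1), z ^ n • ρ n) * (∑ n ∈ range (N + 1), z ^ n • ρ n)ᴴ = 1) :
    polyOfCoeffs ρ N * starReflect ρ N = (X ^ N : ℂ[X]) • 1 := by
  refine eq_of_infinite_map_eval_eq Complex.infinite_sphere_zero_one fun z hz => ?_
  rw [mem_sphere_zero_iff_norm] at hz
  rw [← coe_evalRingHom, Matrix.map_mul, coe_evalRingHom, map_eval_polyOfCoeffs,
    map_eval_starReflect ρ N hz, Matrix.mul_smul, hunit z hz]
  ext i j
  simp [one_apply, apply_ite (eval z)]

end Matrix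

theorem stmt8_general {m N : ℕ} (ρ : ℕ → Matrix (Fin m) (Fin m) ℂ) (hρ : ρ N ≠ 0)
    (U : ℂ → Matrix (Fin m) (Fin m) ℂ)
    (hU : ∀ z : ℂ, U z = ∑ n ∈ Finset.range (N + 1), z ^ n • ρ n)
    (hunit : ∀ z : ℂ, ‖z‖ = 1 → U z * (U z)ᴴ = 1)
    (c : ℂ) (k : ℕ)
    (hdet : ∀ z : ℂ, (U z).det = c * z ^ k) :
    N ≤ k := by
  have hc0 : c ≠ 0 := by
    have h := congrArg det (hunit 1 norm_one)
    rw [det_mul, det_one, hdet, one_pow, mul_one] at h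
    exact left_ne_zero_of_mul_eq_one h
  have hdet_poly : (polyOfCoeffs ρ N).det = C c * X ^ k := Polynomial.funext fun z => by
    rw [← coe_evalRingHom, RingHom.map_det, RingHom.mapMatrix_apply, coe_evalRingHom,
      map_eval_polyOfCoeffs, ← hU, hdet]
    simp
  have hadj := det_smul_eq_smul_adjugate_of_mul_eq_smul_one
    (polyOfCoeffs_mul_starReflect ρ N fun z hz => hU z ▸ hunit z hz)
  rw [hdet_poly] at hadj
  by_contra! hk
  refine hρ (ext fun i j => ?_)
  have h := mul_coeff_zero_eq_zero_of_C_mul_X_pow_mul_eq hk (congrFun₂ hadj j i)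
  rw [coeff_zero_starReflect] at h
  simpa [hc0] using h

/-- If `U(z) = ∑_{n=0}^N ρₙ zⁿ` (with `ρ_N ≠ 0`) is unitary on the unit circle and
`det U(z) = c zᵏ` with `|c| = 1`, then `k ≥ N`. -/
theorem stmt8 {m N : ℕ} (ρ : ℕ → Matrix (Fin m) (Fin m) ℂ) (hρ : ρ N ≠ 0)
    (U : ℂ → Matrix (Fin m) (Fin m) ℂ)
    (hU : ∀ z : ℂ, U z = ∑ n ∈ Finset.range (N + 1), z ^ n • ρ n)
    (hunit : ∀ z : ℂ, ‖z‖ = 1 → U z * (U z)ᴴ = 1)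
    (c : ℂ) (k : ℕ) (hc : ‖c‖ = 1)
    (hdet : ∀ z : ℂ, (U z).det = c * z ^ k) :
    N ≤ k :=
  stmt8_general ρ hρ U hU hunit c k hdet
end

section
/- Let f be an m×k rational matrix function and a a point with |a| < 1 such that rank f(a) < k ≤ m. Then there exists a constant k×k unitary matrix U such that the first column of f(a) U is the zero vector, and consequently g(z) := f(z) U diag((1 - conj(a) z)/(z - a), 1, ..., 1) has no pole at a (its entries, which are rational, are analytic at a whenever f is), and g(z) g*(z) = f(z) f*(z). -/
/-!
Pick a unit vector `v` in the kernel of `f(a)` and complete it to an orthonormal basis; the matrix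
`U` of this basis is unitary and its first column is `v`, so the first column of `f(a) U` vanishes.
Hence every entry of the first column of `f U` has a zero at `a`, which cancels the simple pole of
the Blaschke factor `b(z) = (1 - conj a z) / (z - a)`.

For the identity, work with the para-conjugation `r*(z) = conj (r (1 / conj z))`, which is a ring
endomorphism of `ℂ(X)`. The identity `g g* = f f*` then holds in `ℂ(X)` because `U U* = 1` and
`b b* = 1`, and evaluating it at `z` gives the pointwise statement: clearing the reduced
denominator of `r` by `X ^ N` shows that `r*` is defined at `z` whenever `r` is defined at
`1 / conj z`.
-/

open Matrix ComplexConjugate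

namespace Matrix

theorem exists_ne_zero_mulVec_eq_zero_of_rank_lt {K : Type*} [Field K] {m n : Type*}
    [Fintype n] {M : Matrix m n K} (hM : M.rank < Fintype.card n) : ∃ v ≠ 0, M *ᵥ v = 0 := by
  have h := M.mulVecLin.finrank_range_add_finrank_ker
  rw [Module.finrank_fintype_fun_eq_card, ← Matrix.rank] at h
  obtain ⟨v, hv⟩ := Module.finrank_pos_iff_exists_ne_zero.1 (by omega :
    0 < Module.finrank K (LinearMap.ker M.mulVecLin))
  exact ⟨v, by simpa using hv, v.2⟩

variable {𝕜 : Type*} [RCLike 𝕜] {n : Type*} [Fintype n] [DecidableEq n]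

theorem exists_mem_unitaryGroup_col_eq {w : EuclideanSpace 𝕜 n} (hw : ‖w‖ = 1) (j₀ : n) :
    ∃ U ∈ unitaryGroup n 𝕜, ∀ i, U i j₀ = w i := by
  have hw : Orthonormal 𝕜 (({j₀} : Set n).domRestrict fun _ => w) :=
    orthonormal_subsingleton_iff.2 fun _ => hw
  obtain ⟨b, hb⟩ := hw.exists_orthonormalBasis_extension_of_card_eq (by simp)
  refine ⟨(EuclideanSpace.basisFun n 𝕜).toBasis.toMatrix b,
    (EuclideanSpace.basisFun n 𝕜).toMatrix_orthonormalBasis_mem_unitary b, fun i => ?_⟩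
  rw [Module.Basis.toMatrix_apply, hb j₀ rfl]
  simp

theorem exists_mem_unitaryGroup_mul_apply_eq_zero {m : Type*} {M : Matrix m n 𝕜}
    (hM : M.rank < Fintype.card n) (j₀ : n) :
    ∃ U ∈ unitaryGroup n 𝕜, ∀ i, (M * U) i j₀ = 0 := by
  obtain ⟨v, hv0, hMv⟩ := exists_ne_zero_mulVec_eq_zero_of_rank_lt hM
  have hv : WithLp.toLp 2 v ≠ 0 := by simpa using hv0
  obtain ⟨U, hU, hcol⟩ :=
    exists_mem_unitaryGroup_col_eq (norm_smul_inv_norm (𝕜 := 𝕜) hv) j₀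
  refine ⟨U, hU, fun i => ?_⟩
  calc (M * U) i j₀ = (‖WithLp.toLp 2 v‖⁻¹ : 𝕜) * (M *ᵥ v) i := by
        simp [mul_apply, hcol, mulVec, dotProduct, Finset.mul_sum, mul_left_comm]
    _ = 0 := by simp [hMv]

end Matrix

namespace Polynomial

variable {K : Type*} [Field K] [StarRing K] {z : K}

theorem eval_reflect_map_conj (hz : z ≠ 0) {N : ℕ} {p : K[X]} (hp : p.natDegree ≤ N) :
    ((p.map (conj : K →+* K)).reflect N).eval z = z ^ N * conj (p.eval (conj z)⁻¹) := by
  let _ : Invertible z⁻¹ := invertibleOfNonzero (inv_ne_zero hz)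
  have h := eval₂_reflect_mul_pow (RingHom.id K) z⁻¹ N (p.map conj) (natDegree_map_le.trans hp)
  have hconj : eval₂ (RingHom.id K) z⁻¹ (p.map conj) = conj (p.eval (conj z)⁻¹) := by
    rw [eval₂_id, eval_map, ← eval₂_at_apply, map_inv₀, starRingEnd_self_apply]
  rw [invOf_eq_inv, inv_inv, eval₂_id, hconj] at h
  rw [← h, inv_pow, mul_left_comm, mul_inv_cancel₀ (pow_ne_zero N hz), mul_one]

theorem eval_reflect_map_conj_ne_zero (hz : z ≠ 0) {N : ℕ} {p : K[X]} (hp : p.natDegree ≤ N)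
    (hpz : p.eval (conj z)⁻¹ ≠ 0) : ((p.map (conj : K →+* K)).reflect N).eval z ≠ 0 := by
  rw [eval_reflect_map_conj hz hp]
  exact mul_ne_zero (pow_ne_zero _ hz) ((_root_.map_ne_zero _).2 hpz)

end Polynomial

namespace RatFunc

open Polynomial

variable {K : Type*} [Field K] {z : K}

theorem X_sub_C_ne_zero (a : K) : (X - C a : RatFunc K) ≠ 0 := by
  rw [← algebraMap_X, ← algebraMap_C, ← map_sub]
  exact algebraMap_ne_zero (Polynomial.X_sub_C_ne_zero a)

theorem algebraMap_one_sub_C_mul_X (a : K) :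
    algebraMap K[X] (RatFunc K) (1 - Polynomial.C a * Polynomial.X) = 1 - C a * X := by
  rw [map_sub, map_one, map_mul, algebraMap_C, algebraMap_X]

theorem one_sub_C_mul_X_ne_zero (a : K) : (1 - C a * X : RatFunc K) ≠ 0 := by
  rw [← algebraMap_one_sub_C_mul_X]
  exact algebraMap_ne_zero fun h => by simpa using congrArg (Polynomial.eval 0) h

theorem eval_denom_C_ne_zero (c : K) : (C c).denom.eval z ≠ 0 := by
  simp

theorem eval_denom_mul_ne_zero {x y : RatFunc K} (hx : x.denom.eval z ≠ 0)
    (hy : y.denom.eval z ≠ 0) : (x * y).denom.eval z ≠ 0 :=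
  mt (eval_eq_zero_of_dvd_of_eval_eq_zero (denom_mul_dvd x y)) (by simp [hx, hy])

theorem eval_denom_sum_ne_zero {ι : Type*} (s : Finset ι) {r : ι → RatFunc K}
    (hr : ∀ i ∈ s, (r i).denom.eval z ≠ 0) : (∑ i ∈ s, r i).denom.eval z ≠ 0 := by
  classical
  induction s using Finset.induction_on with
  | empty => simp
  | insert i s hi ih =>
    rw [Finset.sum_insert hi]
    refine mt (eval_eq_zero_of_dvd_of_eval_eq_zero (denom_add_dvd _ _)) ?_
    simp [hr i (Finset.mem_insert_self i s), ih fun j hj => hr j (Finset.mem_insert_of_mem hj)]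

theorem eval_sum {ι : Type*} (s : Finset ι) {r : ι → RatFunc K}
    (hr : ∀ i ∈ s, (r i).denom.eval z ≠ 0) :
    eval (RingHom.id K) z (∑ i ∈ s, r i) = ∑ i ∈ s, eval (RingHom.id K) z (r i) := by
  classical
  induction s using Finset.induction_on with
  | empty => simp
  | insert i s hi ih =>
    have hs : ∀ j ∈ s, (r j).denom.eval z ≠ 0 :=
      fun j hj => hr j (Finset.mem_insert_of_mem hj)
    rw [Finset.sum_insert hi, Finset.sum_insert hi,
      eval_add _ _ (hr i (Finset.mem_insert_self i s)) (eval_denom_sum_ne_zero s hs), ih hs]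

theorem eval_denom_ne_zero_of_mul_eq {r : RatFunc K} {p q : K[X]}
    (h : r * algebraMap K[X] (RatFunc K) q = algebraMap K[X] (RatFunc K) p)
    (hq : q.eval z ≠ 0) : r.denom.eval z ≠ 0 := by
  have hq0 : q ≠ 0 := by rintro rfl; simp at hq
  refine mt (eval_eq_zero_of_dvd_of_eval_eq_zero ((denom_dvd hq0).2 ⟨p, ?_⟩)) hq
  rw [← h, mul_div_cancel_right₀ _ (algebraMap_ne_zero hq0)]

theorem eval_eq_div_of_mul_eq {r : RatFunc K} {p q : K[X]}
    (h : r * algebraMap K[X] (RatFunc K) q = algebraMap K[X] (RatFunc K) p)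
    (hq : q.eval z ≠ 0) : eval (RingHom.id K) z r = p.eval z / q.eval z := by
  have heval := congrArg (eval (RingHom.id K) z) h
  rw [eval_mul _ _ (eval_denom_ne_zero_of_mul_eq h hq) (by simp)] at heval
  simp only [eval_algebraMap, Algebra.algebraMap_self, RingHom.id_apply, eval₂_id] at heval
  rw [eq_div_iff hq, heval]

theorem eval_denom_mul_div_X_sub_C_ne_zero {a : K} {r s : RatFunc K} (hr : r.denom.eval a ≠ 0)
    (hra : eval (RingHom.id K) a r = 0) (hs : s.denom.eval a ≠ 0) :
    (r * (s / (X - C a))).denom.eval a ≠ 0 := by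
  have hroot : r.num.IsRoot a := (div_eq_zero_iff.1 hra).resolve_right hr
  obtain ⟨q, hq⟩ := dvd_iff_isRoot.2 hroot
  have hquot : r / (X - C a) * algebraMap K[X] (RatFunc K) r.denom =
      algebraMap K[X] (RatFunc K) q := by
    have hden := algebraMap_ne_zero (denom_ne_zero r)
    have hXa := X_sub_C_ne_zero a
    nth_rw 1 [← num_div_denom r]
    rw [hq, map_mul, map_sub, algebraMap_X, algebraMap_C]
    field_simp
  rw [← mul_div_assoc, ← div_mul_eq_mul_div]
  exact eval_denom_mul_ne_zero (eval_denom_ne_zero_of_mul_eq hquot hr) hs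

section Matrix

variable {m n o : Type*} [Fintype n] {F : Matrix m n (RatFunc K)} {G : Matrix n o (RatFunc K)}

theorem eval_denom_matrix_mul_apply_ne_zero (hF : ∀ i l, (F i l).denom.eval z ≠ 0)
    (hG : ∀ l j, (G l j).denom.eval z ≠ 0) (i : m) (j : o) :
    ((F * G) i j).denom.eval z ≠ 0 :=
  eval_denom_sum_ne_zero _ fun l _ => eval_denom_mul_ne_zero (hF i l) (hG l j)

theorem matrix_map_eval_mul (hF : ∀ i l, (F i l).denom.eval z ≠ 0)
    (hG : ∀ l j, (G l j).denom.eval z ≠ 0) :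
    (F * G).map (eval (RingHom.id K) z) =
      F.map (eval (RingHom.id K) z) * G.map (eval (RingHom.id K) z) := by
  ext i j
  rw [Matrix.map_apply, Matrix.mul_apply,
    eval_sum _ fun l _ => eval_denom_mul_ne_zero (hF i l) (hG l j)]
  exact Finset.sum_congr rfl fun l _ => eval_mul _ _ (hF i l) (hG l j)

theorem matrix_map_eval_mul_map_C (hF : ∀ i l, (F i l).denom.eval z ≠ 0) (U : Matrix n o K) :
    (F * U.map C).map (eval (RingHom.id K) z) = F.map (eval (RingHom.id K) z) * U := by
  rw [matrix_map_eval_mul (G := U.map C) hF fun _ _ => eval_denom_C_ne_zero _, Matrix.map_map]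
  congr 1
  ext
  simp

end Matrix

section ParaConj

variable [StarRing K]

theorem eval₂_conj_inv_X_mul_X_pow {N : ℕ} {p : K[X]} (hp : p.natDegree ≤ N) :
    p.eval₂ ((algebraMap K (RatFunc K)).comp conj) X⁻¹ * X ^ N =
      algebraMap K[X] (RatFunc K) ((p.map conj).reflect N) := by
  let _ : Invertible (X : RatFunc K) := invertibleOfNonzero X_ne_zero
  have h := eval₂_reflect_mul_pow (algebraMap K (RatFunc K)) X N ((p.map conj).reflect N)
    (natDegree_reflect_le.trans (max_le le_rfl (natDegree_map_le.trans hp)))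
  rwa [reflect_reflect, invOf_eq_inv, eval₂_map, ← aeval_def, ← algebraMap_X,
    aeval_algebraMap_apply, aeval_X_left_apply] at h

theorem eval₂_conj_inv_X_ne_zero {p : K[X]} (hp : p ≠ 0) :
    p.eval₂ ((algebraMap K (RatFunc K)).comp conj) X⁻¹ ≠ 0 := by
  intro h
  have := eval₂_conj_inv_X_mul_X_pow (le_refl p.natDegree)
  rw [h, zero_mul, eq_comm, map_eq_zero_iff _ (algebraMap_injective K), reflect_eq_zero_iff,
    Polynomial.map_eq_zero_iff (RingHom.injective _)] at this
  exact hp this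

/-- The para-conjugation `r ↦ r*`, `r*(z) = conj (r (1 / conj z))`. -/
noncomputable def paraConj : RatFunc K →+* RatFunc K :=
  liftRingHom (eval₂RingHom ((algebraMap K (RatFunc K)).comp conj) X⁻¹) fun _ hp =>
    mem_nonZeroDivisors_of_ne_zero (eval₂_conj_inv_X_ne_zero (nonZeroDivisors.ne_zero hp))

theorem paraConj_algebraMap (p : K[X]) :
    paraConj (algebraMap K[X] (RatFunc K) p) =
      p.eval₂ ((algebraMap K (RatFunc K)).comp conj) X⁻¹ := by
  have h : paraConj (algebraMap K[X] (RatFunc K) p / algebraMap K[X] (RatFunc K) 1) = _ :=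
    liftRingHom_apply_div _ _ p 1
  rwa [map_one, div_one, map_one, div_one] at h

@[simp]
theorem paraConj_C (c : K) : paraConj (C c) = C (conj c) := by
  rw [← algebraMap_C, paraConj_algebraMap, eval₂_C]
  rfl

@[simp]
theorem paraConj_X : paraConj (X : RatFunc K) = X⁻¹ := by
  have h := paraConj_algebraMap (K := K) Polynomial.X
  rwa [eval₂_X, algebraMap_X] at h

theorem paraConj_mul_algebraMap_reflect (r : RatFunc K) {N : ℕ} (hnum : r.num.natDegree ≤ N)
    (hdenom : r.denom.natDegree ≤ N) :
    paraConj r * algebraMap K[X] (RatFunc K) ((r.denom.map conj).reflect N) =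
      algebraMap K[X] (RatFunc K) ((r.num.map conj).reflect N) := by
  have hr : paraConj r = paraConj (algebraMap K[X] (RatFunc K) r.num) /
      paraConj (algebraMap K[X] (RatFunc K) r.denom) := by
    conv_lhs => rw [← num_div_denom r]
    rw [map_div₀]
  rw [← eval₂_conj_inv_X_mul_X_pow hdenom, ← eval₂_conj_inv_X_mul_X_pow hnum, ← mul_assoc,
    hr, paraConj_algebraMap, paraConj_algebraMap,
    div_mul_cancel₀ _ (eval₂_conj_inv_X_ne_zero (denom_ne_zero r))]

theorem eval_denom_paraConj_ne_zero (hz : z ≠ 0) {r : RatFunc K}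
    (hr : r.denom.eval (conj z)⁻¹ ≠ 0) : (paraConj r).denom.eval z ≠ 0 :=
  eval_denom_ne_zero_of_mul_eq (paraConj_mul_algebraMap_reflect r le_sup_left le_sup_right)
    (eval_reflect_map_conj_ne_zero hz le_sup_right hr)

theorem eval_paraConj (hz : z ≠ 0) {r : RatFunc K} (hr : r.denom.eval (conj z)⁻¹ ≠ 0) :
    eval (RingHom.id K) z (paraConj r) = conj (eval (RingHom.id K) (conj z)⁻¹ r) := by
  rw [eval_eq_div_of_mul_eq (paraConj_mul_algebraMap_reflect r le_sup_left le_sup_right)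
      (eval_reflect_map_conj_ne_zero hz le_sup_right hr),
    eval_reflect_map_conj hz le_sup_left, eval_reflect_map_conj hz le_sup_right,
    mul_div_mul_left _ _ (pow_ne_zero _ hz), ← map_div₀]
  rfl

noncomputable def blaschkeFactor (a : K) : RatFunc K :=
  (1 - C (conj a) * X) / (X - C a)

theorem blaschkeFactor_mul_paraConj (a : K) :
    blaschkeFactor a * paraConj (blaschkeFactor a) = 1 := by
  have hX : (X : RatFunc K) ≠ 0 := X_ne_zero
  have hXa := X_sub_C_ne_zero a
  have hnum := one_sub_C_mul_X_ne_zero (conj a)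
  simp only [blaschkeFactor, map_div₀, map_sub, map_one, map_mul, paraConj_C, paraConj_X,
    starRingEnd_self_apply]
  field_simp

theorem eval_denom_mul_blaschkeFactor_ne_zero {a : K} {r : RatFunc K} (hr : r.denom.eval a ≠ 0)
    (hra : eval (RingHom.id K) a r = 0) : (r * blaschkeFactor a).denom.eval a ≠ 0 :=
  eval_denom_mul_div_X_sub_C_ne_zero hr hra <| by
    rw [← algebraMap_one_sub_C_mul_X, denom_algebraMap]
    simp

end ParaConj

end RatFunc

namespace Matrix

open RatFunc

variable {K : Type*} [Field K] [StarRing K] {l m n : Type*}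

noncomputable def paraConjTranspose (F : Matrix m n (RatFunc K)) : Matrix n m (RatFunc K) :=
  (F.map paraConj)ᵀ

theorem paraConjTranspose_mul [Fintype m] (F : Matrix l m (RatFunc K))
    (G : Matrix m n (RatFunc K)) :
    (F * G).paraConjTranspose = G.paraConjTranspose * F.paraConjTranspose := by
  rw [paraConjTranspose, Matrix.map_mul, transpose_mul]
  rfl

theorem paraConjTranspose_map_C (U : Matrix m n K) :
    (U.map C).paraConjTranspose = Uᴴ.map C := by
  ext i j
  simp [paraConjTranspose, starRingEnd_apply]

theorem paraConjTranspose_diagonal [DecidableEq n] (d : n → RatFunc K) :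
    (diagonal d).paraConjTranspose = diagonal fun i => paraConj (d i) := by
  rw [paraConjTranspose, diagonal_map (map_zero _), diagonal_transpose]

theorem mul_map_C_mul_diagonal_mul_paraConjTranspose [Fintype n] [DecidableEq n]
    (F : Matrix m n (RatFunc K)) {U : Matrix n n K} (hU : U * Uᴴ = 1) {d : n → RatFunc K}
    (hd : ∀ j, d j * paraConj (d j) = 1) :
    F * U.map C * diagonal d * (F * U.map C * diagonal d).paraConjTranspose =
      F * F.paraConjTranspose := by
  have hdd : diagonal d * diagonal (fun j => paraConj (d j)) = 1 := by
    rw [diagonal_mul_diagonal, ← diagonal_one]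
    exact congrArg diagonal (funext hd)
  have hUU : U.map C * Uᴴ.map C = 1 := by
    rw [← Matrix.map_mul, hU, Matrix.map_one _ (map_zero C) (map_one C)]
  simp only [paraConjTranspose_mul, paraConjTranspose_map_C, paraConjTranspose_diagonal,
    Matrix.mul_assoc]
  rw [← Matrix.mul_assoc (diagonal d), hdd, Matrix.one_mul, ← Matrix.mul_assoc (U.map C), hUU,
    Matrix.one_mul]

theorem eval_denom_mul_diagonal_blaschkeFactor_ne_zero [Fintype n] [DecidableEq n] {a : K}
    {H : Matrix m n (RatFunc K)} (p : n → Prop) [DecidablePred p]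
    (hH : ∀ i j, (H i j).denom.eval a ≠ 0)
    (hzero : ∀ i j, p j → eval (RingHom.id K) a (H i j) = 0)
    (i : m) (j : n) :
    ((H * diagonal fun j => if p j then blaschkeFactor a else 1) i j).denom.eval a ≠ 0 := by
  rw [mul_diagonal]
  split_ifs with hj
  · exact eval_denom_mul_blaschkeFactor_ne_zero (hH i j) (hzero i j hj)
  · rw [mul_one]
    exact hH i j

theorem map_eval_mul_paraConjTranspose [Fintype n] {z : K} (hz : z ≠ 0)
    {F : Matrix m n (RatFunc K)} (hF : ∀ i j, (F i j).denom.eval z ≠ 0)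
    (hF' : ∀ i j, (F i j).denom.eval (conj z)⁻¹ ≠ 0) :
    (F * F.paraConjTranspose).map (eval (RingHom.id K) z) =
      F.map (eval (RingHom.id K) z) * (F.map (eval (RingHom.id K) (conj z)⁻¹))ᴴ := by
  rw [matrix_map_eval_mul (G := F.paraConjTranspose) hF
    fun j i => eval_denom_paraConj_ne_zero hz (hF' i j)]
  congr 1
  ext i j
  simp [paraConjTranspose, eval_paraConj hz (hF' j i), starRingEnd_apply]

end Matrix

open RatFunc

theorem stmt14_general {m k : ℕ} (f : Matrix (Fin m) (Fin k) (RatFunc ℂ))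
    (a : ℂ)
    (hdef : ∀ i j, Polynomial.eval a (f i j).denom ≠ 0)
    (hrank : (Matrix.of fun i j => (f i j).eval (RingHom.id ℂ) a).rank < k) :
    ∃ U : Matrix (Fin k) (Fin k) ℂ, U * Uᴴ = 1 ∧
      (∀ i : Fin m, ∀ j : Fin k, (j : ℕ) = 0 →
        ((Matrix.of fun i' j' => (f i' j').eval (RingHom.id ℂ) a) * U) i j = 0) ∧
      ∀ g : Matrix (Fin m) (Fin k) (RatFunc ℂ),
        g = f * (Matrix.of fun i j => RatFunc.C (U i j)) *
          Matrix.diagonal (fun j : Fin k => if (j : ℕ) = 0 then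
            (1 - RatFunc.C ((starRingEnd ℂ) a) * RatFunc.X) / (RatFunc.X - RatFunc.C a)
            else 1) →
        (∀ i j, Polynomial.eval a (g i j).denom ≠ 0) ∧
        (∀ z : ℂ, z ≠ 0 →
          (∀ i j, Polynomial.eval z (f i j).denom ≠ 0) →
          (∀ i j, Polynomial.eval ((starRingEnd ℂ) z)⁻¹ (f i j).denom ≠ 0) →
          (∀ i j, Polynomial.eval z (g i j).denom ≠ 0) →
          (∀ i j, Polynomial.eval ((starRingEnd ℂ) z)⁻¹ (g i j).denom ≠ 0) →
          (Matrix.of fun i j => (g i j).eval (RingHom.id ℂ) z) *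
            (Matrix.of fun i j => (g i j).eval (RingHom.id ℂ) ((starRingEnd ℂ) z)⁻¹)ᴴ =
          (Matrix.of fun i j => (f i j).eval (RingHom.id ℂ) z) *
            (Matrix.of fun i j => (f i j).eval (RingHom.id ℂ) ((starRingEnd ℂ) z)⁻¹)ᴴ) := by
  have hk : 0 < k := (Nat.zero_le _).trans_lt hrank
  obtain ⟨U, hU, hcol⟩ :=
    exists_mem_unitaryGroup_mul_apply_eq_zero (by simpa using hrank) (⟨0, hk⟩ : Fin k)
  rw [mem_unitaryGroup_iff, star_eq_conjTranspose] at hU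
  refine ⟨U, hU, fun i j hj => ?_, fun g hg => ⟨?_, fun z hz hfz hfw hgz hgw => ?_⟩⟩
  · obtain rfl : j = ⟨0, hk⟩ := Fin.ext hj
    exact hcol i
  · rw [hg]
    refine eval_denom_mul_diagonal_blaschkeFactor_ne_zero (fun j : Fin k => (j : ℕ) = 0)
      (eval_denom_matrix_mul_apply_ne_zero hdef fun _ _ => eval_denom_C_ne_zero _)
      fun i j hj => ?_
    obtain rfl : j = ⟨0, hk⟩ := Fin.ext hj
    exact (congrFun₂ (matrix_map_eval_mul_map_C hdef U) i _).trans (hcol i)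
  · have hgg : g * g.paraConjTranspose = f * f.paraConjTranspose := by
      rw [hg]
      refine mul_map_C_mul_diagonal_mul_paraConjTranspose f hU fun j => ?_
      split_ifs
      exacts [blaschkeFactor_mul_paraConj a, by simp]
    have hg_eval := map_eval_mul_paraConjTranspose hz hgz hgw
    rw [hgg, map_eval_mul_paraConjTranspose hz hfz hfw] at hg_eval
    exact hg_eval.symm

/-- If `f` is an `m × k` rational matrix function with `rank f(a) < k ≤ m` for some `|a| < 1`,
then there is a constant unitary `U` such that the first column of `f(a) U` vanishes, and
`g(z) = f(z) U diag((1 - ā z)/(z - a), 1, …, 1)` has no pole at `a` and satisfies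
`g g* = f f*`. -/
theorem stmt14 {m k : ℕ} (hkm : k ≤ m) (f : Matrix (Fin m) (Fin k) (RatFunc ℂ))
    (a : ℂ) (ha : ‖a‖ < 1)
    (hdef : ∀ i j, Polynomial.eval a (f i j).denom ≠ 0)
    (hrank : (Matrix.of fun i j => (f i j).eval (RingHom.id ℂ) a).rank < k) :
    ∃ U : Matrix (Fin k) (Fin k) ℂ, U * Uᴴ = 1 ∧
      (∀ i : Fin m, ∀ j : Fin k, (j : ℕ) = 0 →
        ((Matrix.of fun i' j' => (f i' j').eval (RingHom.id ℂ) a) * U) i j = 0) ∧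
      ∀ g : Matrix (Fin m) (Fin k) (RatFunc ℂ),
        g = f * (Matrix.of fun i j => RatFunc.C (U i j)) *
          Matrix.diagonal (fun j : Fin k => if (j : ℕ) = 0 then
            (1 - RatFunc.C ((starRingEnd ℂ) a) * RatFunc.X) / (RatFunc.X - RatFunc.C a)
            else 1) →
        (∀ i j, Polynomial.eval a (g i j).denom ≠ 0) ∧
        (∀ z : ℂ, z ≠ 0 →
          (∀ i j, Polynomial.eval z (f i j).denom ≠ 0) →
          (∀ i j, Polynomial.eval ((starRingEnd ℂ) z)⁻¹ (f i j).denom ≠ 0) →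
          (∀ i j, Polynomial.eval z (g i j).denom ≠ 0) →
          (∀ i j, Polynomial.eval ((starRingEnd ℂ) z)⁻¹ (g i j).denom ≠ 0) →
          (Matrix.of fun i j => (g i j).eval (RingHom.id ℂ) z) *
            (Matrix.of fun i j => (g i j).eval (RingHom.id ℂ) ((starRingEnd ℂ) z)⁻¹)ᴴ =
          (Matrix.of fun i j => (f i j).eval (RingHom.id ℂ) z) *
            (Matrix.of fun i j => (f i j).eval (RingHom.id ℂ) ((starRingEnd ℂ) z)⁻¹)ᴴ) :=
  stmt14_general f a hdef hrank
end
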